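/- arXiv:2010.01561 — 3 statements merged into one kernel-verified Lean document; each statement's English description precedes it below -/
import Mathlib

section
/- Let 1 < p < ∞ and 0 < λ < p − 1, and set K = (λ/(p−1))^{1/p}. Suppose r : [0,π_p] → ℝ is continuous and the boundary value problem (|u′|^{p−2}u′)′ + (λ + r(x))|u|^{p−2}u = 0 on (0,π_p), u(0) = u(π_p) = 0, has a nontrivial solution. Then ∫₀^{π_p} r_+(x) dx > 2·K^{p−1}·(cot_p(K·π_p/2))^{p−1}. -/
/-- `arcsin_p x = ∫₀ˣ (1 - tᵖ)^(-1/p) dt`. -/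
noncomputable def arcsinP (p x : ℝ) : ℝ := ∫ t in (0:ℝ)..x, (1 - t ^ p) ^ (-(1 / p))

/-- The generalized π: `π_p = 2 arcsin_p 1`. -/
noncomputable def piP (p : ℝ) : ℝ := 2 * arcsinP p 1

/-- `sin_p` on `[0, π_p/2]`, defined as the inverse of `arcsin_p : [0,1] → [0, π_p/2]`. -/
noncomputable def sinPHalf (p : ℝ) : ℝ → ℝ := Function.invFunOn (arcsinP p) (Set.Icc 0 1)

/-- `sin_p` on `[0, π_p]`, extended by `sin_p x = sin_p (π_p - x)`. -/
noncomputable def sinP (p x : ℝ) : ℝ :=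
  if x ≤ piP p / 2 then sinPHalf p x else sinPHalf p (piP p - x)

/-- `cos_p x = (1 - sin_p x ^ p)^(1/p)` on `[0, π_p/2]`, with minus sign on `[π_p/2, π_p]`. -/
noncomputable def cosP (p x : ℝ) : ℝ :=
  if x ≤ piP p / 2 then (1 - sinP p x ^ p) ^ (1 / p)
  else -((1 - sinP p x ^ p) ^ (1 / p))

/-- `cot_p x = cos_p x / sin_p x`. -/
noncomputable def cotP (p x : ℝ) : ℝ := cosP p x / sinP p x

/-- `u` (with continuous derivative `u'` on `[0, π_p]`) is a nontrivial solution of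
`(|u'|^(p-2) u')' + (λ + r x) |u|^(p-2) u = 0` on `(0, π_p)` with `u 0 = u π_p = 0`. -/
def IsNontrivialSolution (p lam : ℝ) (r u u' : ℝ → ℝ) : Prop :=
  (∃ x ∈ Set.Icc (0:ℝ) (piP p), u x ≠ 0) ∧
  ContinuousOn u' (Set.Icc 0 (piP p)) ∧
  (∀ x ∈ Set.Icc (0:ℝ) (piP p), HasDerivWithinAt u (u' x) (Set.Icc 0 (piP p)) x) ∧
  u 0 = 0 ∧ u (piP p) = 0 ∧
  ∀ x ∈ Set.Ioo (0:ℝ) (piP p),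
    HasDerivAt (fun y => |u' y| ^ (p - 2) * u' y)
      (-((lam + r x) * |u x| ^ (p - 2) * u x)) x

/-!
Take a nodal interval `(a, b) ⊆ [0, π_p]` of `u` on which `u > 0` (replacing `u` by `-u` if
necessary). Local uniqueness for the half-linear equation forces `u'(a) > 0 > u'(b)`, so the
Riccati variable `w = -φ_p(u') / φ_p(u)`, `φ_p(v) = |v|^(p-2) v`, solves `w' = F(w) + r` with
`F(s) = λ + (p-1)|s|^(p/(p-1))` and runs from `-∞` to `+∞` on `(a, b)`.

Fix `c > 0` and let `B` be the primitive of `min(F c, F) / F`. Then `(B ∘ w)' ≤ F c + r₊`,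
strictly where `w = 0` because `F 0 = λ < F c`, while `B ∘ w` climbs from `-(c + F c · I)` to
`c + F c · I`, `I = ∫_c^∞ ds / F(s)`. Hence `2 (c + F c · I) < F c · (b - a) + ∫_a^b r₊`.
For `c = K^(p-1) cot_p(K π_p / 2)^(p-1)` the substitution `s = (K cot_p θ)^(p-1)` gives
`I = π_p / 2`, and `b - a ≤ π_p` leaves `∫ r₊ > 2c`.
-/

open MeasureTheory Set Filter Topology

section ArcsinP

variable {p : ℝ}

lemma measurable_arcsinP_integrand (p : ℝ) :
    Measurable fun t : ℝ => (1 - t ^ p) ^ (-(1 / p)) := by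
  measurability

lemma intervalIntegrable_arcsinP_integrand (hp : 1 < p) :
    IntervalIntegrable (fun t : ℝ => (1 - t ^ p) ^ (-(1 / p))) volume 0 1 := by
  have hp0 : 0 < p := one_pos.trans hp
  have hdom : IntervalIntegrable (fun t : ℝ => (1 - t) ^ (-(1 / p))) volume 0 1 := by
    have h : IntervalIntegrable (fun t : ℝ => t ^ (-(1 / p))) volume 0 1 :=
      intervalIntegral.intervalIntegrable_rpow' (by rw [neg_lt_neg_iff, div_lt_one hp0]; exact hp)
    simpa using (h.comp_sub_left 1).symm
  rw [intervalIntegrable_iff_integrableOn_Ioc_of_le zero_le_one] at hdom ⊢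
  refine hdom.mono' (measurable_arcsinP_integrand p).aestronglyMeasurable
    ((ae_restrict_iff' measurableSet_Ioc).2 (ae_of_all _ ?_))
  intro t ⟨ht0, ht1⟩
  have htp : t ^ p ≤ t := by
    simpa using Real.rpow_le_rpow_of_exponent_ge ht0 ht1 hp.le
  have htp1 : t ^ p ≤ 1 := Real.rpow_le_one ht0.le ht1 hp0.le
  rw [Real.norm_eq_abs, abs_of_nonneg (Real.rpow_nonneg (sub_nonneg.2 htp1) _)]
  rcases ht1.eq_or_lt with rfl | ht1
  · simp
  · exact Real.rpow_le_rpow_of_nonpos (by linarith) (by linarith)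
      (neg_nonpos.2 (by positivity))

lemma one_sub_rpow_pos (hp : 1 < p) {t : ℝ} (ht : t ∈ Ioo (0 : ℝ) 1) : 0 < 1 - t ^ p :=
  sub_pos.2 (Real.rpow_lt_one ht.1.le ht.2 (one_pos.trans hp))

lemma arcsinP_zero : arcsinP p 0 = 0 := intervalIntegral.integral_same

lemma arcsinP_one : arcsinP p 1 = piP p / 2 := by
  unfold piP; ring

lemma continuousOn_arcsinP (hp : 1 < p) : ContinuousOn (arcsinP p) (Icc 0 1) := by
  have hint : IntegrableOn (fun t : ℝ => (1 - t ^ p) ^ (-(1 / p))) (uIcc 0 1) := by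
    rw [uIcc_of_le zero_le_one, ← intervalIntegrable_iff_integrableOn_Icc_of_le zero_le_one]
    exact intervalIntegrable_arcsinP_integrand hp
  have := intervalIntegral.continuousOn_primitive_interval hint
  rwa [uIcc_of_le zero_le_one] at this

lemma hasDerivAt_arcsinP (hp : 1 < p) {x : ℝ} (hx : x ∈ Ioo (0 : ℝ) 1) :
    HasDerivAt (arcsinP p) ((1 - x ^ p) ^ (-(1 / p))) x := by
  refine intervalIntegral.integral_hasDerivAt_right
    ((intervalIntegrable_arcsinP_integrand hp).mono_set ?_)
    ⟨univ, univ_mem, (measurable_arcsinP_integrand p).aestronglyMeasurable.restrict⟩ ?_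
  · rw [uIcc_of_le zero_le_one]; exact uIcc_subset_Icc ⟨le_rfl, zero_le_one⟩ ⟨hx.1.le, hx.2.le⟩
  · have hc : ContinuousAt (fun t : ℝ => 1 - t ^ p) x :=
      continuousAt_const.sub (Real.continuousAt_rpow_const x p (Or.inl hx.1.ne'))
    exact hc.rpow_const (Or.inl (one_sub_rpow_pos hp hx).ne')

lemma piP_pos (hp : 1 < p) : 0 < piP p := by
  have : 0 < arcsinP p 1 :=
    intervalIntegral.intervalIntegral_pos_of_pos_on (intervalIntegrable_arcsinP_integrand hp)
      (fun t ht => Real.rpow_pos_of_pos (one_sub_rpow_pos hp ht) _) one_pos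
  linarith [arcsinP_one (p := p)]

lemma sinPHalf_spec (hp : 1 < p) {y : ℝ} (hy : y ∈ Icc 0 (piP p / 2)) :
    sinPHalf p y ∈ Icc (0 : ℝ) 1 ∧ arcsinP p (sinPHalf p y) = y := by
  have hex : ∃ t ∈ Icc (0 : ℝ) 1, arcsinP p t = y := by
    refine intermediate_value_Icc zero_le_one (continuousOn_arcsinP hp) ?_
    rwa [arcsinP_zero, arcsinP_one]
  exact ⟨Function.invFunOn_mem hex, Function.invFunOn_eq hex⟩

lemma sinPHalf_mem_Ioo (hp : 1 < p) {y : ℝ} (hy : y ∈ Ioo 0 (piP p / 2)) :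
    sinPHalf p y ∈ Ioo (0 : ℝ) 1 := by
  obtain ⟨⟨h0, h1⟩, harc⟩ := sinPHalf_spec hp (Ioo_subset_Icc_self hy)
  refine ⟨h0.lt_of_ne ?_, h1.lt_of_ne ?_⟩ <;> rintro h
  · rw [← h, arcsinP_zero] at harc; exact hy.1.ne harc
  · rw [h, arcsinP_one] at harc; exact hy.2.ne' harc

lemma cotP_eq {y : ℝ} (hy : y ≤ piP p / 2) :
    cotP p y = (1 - sinPHalf p y ^ p) ^ (1 / p) / sinPHalf p y := by
  simp only [cotP, cosP, sinP, if_pos hy]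

end ArcsinP

noncomputable def riccatiRhs (p lam s : ℝ) : ℝ := lam + (p - 1) * |s| ^ (p / (p - 1))

section RiccatiRhs

variable {p lam : ℝ}

lemma riccatiRhs_pos (hp : 1 < p) (hlam : 0 < lam) (s : ℝ) : 0 < riccatiRhs p lam s := by
  have : 0 ≤ (p - 1) * |s| ^ (p / (p - 1)) := mul_nonneg (by linarith) (by positivity)
  unfold riccatiRhs; linarith

lemma continuous_riccatiRhs (hp : 1 < p) : Continuous (riccatiRhs p lam) :=
  continuous_const.add <| continuous_const.mul <|
    continuous_abs.rpow_const fun _ => Or.inr (div_pos (by linarith) (by linarith)).le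

lemma riccatiRhs_neg (s : ℝ) : riccatiRhs p lam (-s) = riccatiRhs p lam s := by
  simp only [riccatiRhs, abs_neg]

lemma riccatiRhs_zero (hp : 1 < p) : riccatiRhs p lam 0 = lam := by
  simp [riccatiRhs, Real.zero_rpow (div_pos (by linarith) (by linarith) : 0 < p / (p - 1)).ne']

lemma lt_riccatiRhs (hp : 1 < p) {s : ℝ} (hs : s ≠ 0) : lam < riccatiRhs p lam s := by
  have : 0 < (p - 1) * |s| ^ (p / (p - 1)) := mul_pos (by linarith) (by positivity)
  unfold riccatiRhs; linarith

lemma riccatiRhs_le_riccatiRhs (hp : 1 < p) {s t : ℝ} (hs : 0 ≤ s) (hst : s ≤ t) :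
    riccatiRhs p lam s ≤ riccatiRhs p lam t := by
  have : |s| ^ (p / (p - 1)) ≤ |t| ^ (p / (p - 1)) := by
    rw [abs_of_nonneg hs, abs_of_nonneg (hs.trans hst)]
    exact Real.rpow_le_rpow hs hst (div_pos (by linarith) (by linarith)).le
  unfold riccatiRhs; nlinarith

lemma integrableOn_inv_riccatiRhs (hp : 1 < p) (hlam : 0 < lam) {c : ℝ} (hc : 0 < c) :
    IntegrableOn (fun s => (riccatiRhs p lam s)⁻¹) (Ioi c) := by
  have hp1 : 0 < p - 1 := by linarith
  have hdom : IntegrableOn (fun s : ℝ => (p - 1)⁻¹ * s ^ (-(p / (p - 1)))) (Ioi c) :=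
    (integrableOn_Ioi_rpow_of_lt (by rw [neg_lt_neg_iff, lt_div_iff₀ hp1]; linarith) hc).const_mul _
  refine hdom.mono' ((continuous_riccatiRhs hp).measurable.inv.aestronglyMeasurable.restrict)
    ((ae_restrict_iff' measurableSet_Ioi).2 (ae_of_all _ fun s (hs : c < s) => ?_))
  have hs0 : 0 < s := hc.trans hs
  have hlow : (p - 1) * s ^ (p / (p - 1)) ≤ riccatiRhs p lam s := by
    unfold riccatiRhs; rw [abs_of_pos hs0]; linarith
  rw [Real.norm_eq_abs, abs_of_pos (inv_pos.2 (riccatiRhs_pos hp hlam s)),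
    Real.rpow_neg hs0.le, ← mul_inv]
  exact inv_anti₀ (by positivity) hlow

end RiccatiRhs

-- `scaledCotPow p K (sin_p θ) = (K cot_p θ)^(p-1)`.
noncomputable def scaledCotPow (p K t : ℝ) : ℝ :=
  K ^ (p - 1) * (1 - t ^ p) ^ ((p - 1) / p) * t ^ (1 - p)

section ScaledCotPow

variable {p lam K : ℝ}

lemma scaledCotPow_pos (hp : 1 < p) (hK : 0 < K) {t : ℝ} (ht : t ∈ Ioo (0 : ℝ) 1) :
    0 < scaledCotPow p K t := by
  have := one_sub_rpow_pos hp ht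
  have := ht.1
  unfold scaledCotPow; positivity

lemma riccatiRhs_scaledCotPow (hp : 1 < p) (hK : 0 < K) (hlam : lam = (p - 1) * K ^ p)
    {t : ℝ} (ht : t ∈ Ioo (0 : ℝ) 1) :
    riccatiRhs p lam (scaledCotPow p K t) = (p - 1) * K ^ p * (t ^ p)⁻¹ := by
  have hq := one_sub_rpow_pos hp ht
  have ht0 := ht.1
  have hpow : scaledCotPow p K t ^ (p / (p - 1)) = K ^ p * ((1 - t ^ p) * (t ^ p)⁻¹) := by
    unfold scaledCotPow
    rw [Real.mul_rpow (by positivity) (by positivity),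
      Real.mul_rpow (by positivity) (by positivity),
      ← Real.rpow_mul hK.le, ← Real.rpow_mul hq.le, ← Real.rpow_mul ht0.le,
      show (p - 1) * (p / (p - 1)) = p by field_simp [show p - 1 ≠ 0 by linarith],
      show (p - 1) / p * (p / (p - 1)) = 1 by field_simp [show p - 1 ≠ 0 by linarith],
      show (1 - p) * (p / (p - 1)) = -p by field_simp [show p - 1 ≠ 0 by linarith]; ring,
      Real.rpow_one, Real.rpow_neg ht0.le]
    ring
  have htp : 0 < t ^ p := Real.rpow_pos_of_pos ht0 p
  rw [riccatiRhs, abs_of_pos (scaledCotPow_pos hp hK ht), hpow, hlam]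
  field_simp
  ring

lemma hasDerivAt_scaledCotPow (hp : 1 < p) (hK : 0 < K) (hlam : lam = (p - 1) * K ^ p)
    {t : ℝ} (ht : t ∈ Ioo (0 : ℝ) 1) :
    HasDerivAt (scaledCotPow p K)
      (-(riccatiRhs p lam (scaledCotPow p K t) * ((1 - t ^ p) ^ (-(1 / p)) / K))) t := by
  have hq := one_sub_rpow_pos hp ht
  have ht0 := ht.1
  have hd := (((Real.hasDerivAt_rpow_const (p := p) (Or.inl ht0.ne')).const_sub 1).rpow_const
    (p := (p - 1) / p) (Or.inl hq.ne')).const_mul (K ^ (p - 1)) |>.mul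
    (Real.hasDerivAt_rpow_const (p := 1 - p) (Or.inl ht0.ne'))
  refine HasDerivAt.congr_deriv (f := scaledCotPow p K) hd ?_
  rw [riccatiRhs_scaledCotPow hp hK hlam ht,
    show (p - 1) / p - 1 = -(1 / p) by field_simp; ring, show (1 : ℝ) - p - 1 = -p by ring,
    show (p - 1) / p = 1 + -(1 / p) by field_simp; ring, Real.rpow_add hq, Real.rpow_one,
    Real.rpow_sub ht0, Real.rpow_one, show 1 - p = -(p - 1) by ring, Real.rpow_neg ht0.le,
    Real.rpow_sub ht0, Real.rpow_one, Real.rpow_neg ht0.le,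
    show K ^ p = K ^ (p - 1) * K by rw [Real.rpow_sub hK, Real.rpow_one]; field_simp]
  have htp : 0 < t ^ p := Real.rpow_pos_of_pos ht0 p
  have hE : 0 < (1 - t ^ p) ^ (-(1 / p)) := Real.rpow_pos_of_pos hq _
  field_simp
  ring

lemma tendsto_scaledCotPow (hp : 1 < p) (hK : 0 < K) :
    Tendsto (scaledCotPow p K) (𝓝[>] 0) atTop := by
  have hfac : Tendsto (fun t : ℝ => K ^ (p - 1) * (1 - t ^ p) ^ ((p - 1) / p)) (𝓝[>] 0)
      (𝓝 (K ^ (p - 1))) := by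
    have hc : ContinuousAt (fun t : ℝ => K ^ (p - 1) * (1 - t ^ p) ^ ((p - 1) / p)) 0 :=
      continuousAt_const.mul ((continuousAt_const.sub
        (Real.continuousAt_rpow_const 0 p (Or.inr (by linarith)))).rpow_const
          (Or.inr (by positivity)))
    have := hc.tendsto
    rw [Real.zero_rpow (by linarith), sub_zero, Real.one_rpow, mul_one] at this
    exact this.mono_left nhdsWithin_le_nhds
  have hpow : Tendsto (fun t : ℝ => t ^ (1 - p)) (𝓝[>] 0) atTop :=
    tendsto_rpow_neg_nhdsGT_zero (by linarith)
  exact (hfac.pos_mul_atTop (Real.rpow_pos_of_pos hK _) hpow).congr fun t => by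
    simp only [scaledCotPow]

lemma scaledCotPow_sinPHalf (hp : 1 < p) {y : ℝ} (hy : y ∈ Ioo 0 (piP p / 2)) :
    scaledCotPow p K (sinPHalf p y) = K ^ (p - 1) * cotP p y ^ (p - 1) := by
  have ht := sinPHalf_mem_Ioo hp hy
  have hq := one_sub_rpow_pos hp ht
  rw [cotP_eq hy.2.le, Real.div_rpow (by positivity) ht.1.le, ← Real.rpow_mul hq.le,
    scaledCotPow, show 1 / p * (p - 1) = (p - 1) / p by ring,
    show 1 - p = -(p - 1) by ring, Real.rpow_neg ht.1.le, div_eq_mul_inv]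
  ring

end ScaledCotPow

section KeyIdentity

variable {p lam K : ℝ}

-- The substitution `s = scaledCotPow p K t` turns `ds / F(s)` into `-d(arcsin_p t) / K`.
lemma integral_Ioi_inv_riccatiRhs_scaledCotPow (hp : 1 < p) (hK : 0 < K)
    (hlam : lam = (p - 1) * K ^ p) {t : ℝ} (ht : t ∈ Ioo (0 : ℝ) 1) :
    ∫ s in Ioi (scaledCotPow p K t), (riccatiRhs p lam s)⁻¹ = arcsinP p t / K := by
  have hlam0 : 0 < lam := by rw [hlam]; exact mul_pos (by linarith) (by positivity)
  have hcont : Continuous fun s => (riccatiRhs p lam s)⁻¹ :=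
    (continuous_riccatiRhs hp).inv₀ fun s => (riccatiRhs_pos hp hlam0 s).ne'
  set G : ℝ → ℝ := fun s =>
    (∫ x in scaledCotPow p K t..scaledCotPow p K s, (riccatiRhs p lam x)⁻¹) + arcsinP p s / K
  have hG' : ∀ s ∈ Ioo (0 : ℝ) 1, HasDerivAt G 0 s := by
    intro s hs
    have hprim := intervalIntegral.integral_hasDerivAt_right (a := scaledCotPow p K t)
      (b := scaledCotPow p K s) (hcont.intervalIntegrable _ _)
      (hcont.stronglyMeasurableAtFilter _ _) hcont.continuousAt
    have hd := (hprim.comp s (hasDerivAt_scaledCotPow hp hK hlam hs)).add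
      ((hasDerivAt_arcsinP hp hs).div_const K)
    refine hd.congr_deriv ?_
    field_simp [(riccatiRhs_pos hp hlam0 (scaledCotPow p K s)).ne']
    ring
  have hGt : ∀ s ∈ Ioo (0 : ℝ) 1, G s = arcsinP p t / K := fun s hs => by
    rw [isOpen_Ioo.is_const_of_deriv_eq_zero isPreconnected_Ioo
      (fun x hx => (hG' x hx).differentiableAt.differentiableWithinAt)
      (fun x hx => (hG' x hx).deriv) hs ht]
    simp [G]
  have harcsin : Tendsto (fun s => arcsinP p s / K) (𝓝[>] 0) (𝓝 0) := by
    have := ((continuousOn_arcsinP hp 0 ⟨le_rfl, zero_le_one⟩).mono_of_mem_nhdsWithin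
      (Icc_mem_nhdsGT zero_lt_one)).tendsto.div_const K
    rwa [arcsinP_zero, zero_div] at this
  have hlim : Tendsto G (𝓝[>] 0)
      (𝓝 ((∫ s in Ioi (scaledCotPow p K t), (riccatiRhs p lam s)⁻¹) + 0)) :=
    (intervalIntegral_tendsto_integral_Ioi _
      (integrableOn_inv_riccatiRhs hp hlam0 (scaledCotPow_pos hp hK ht))
      (tendsto_scaledCotPow hp hK)).add harcsin
  rw [add_zero] at hlim
  refine tendsto_nhds_unique hlim (tendsto_const_nhds.congr' ?_)
  filter_upwards [Ioo_mem_nhdsGT zero_lt_one] with s hs using (hGt s hs).symm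

lemma integral_Ioi_inv_riccatiRhs_cotP (hp : 1 < p) (hK : 0 < K)
    (hlam : lam = (p - 1) * K ^ p) {y : ℝ} (hy : y ∈ Ioo 0 (piP p / 2)) :
    ∫ s in Ioi (K ^ (p - 1) * cotP p y ^ (p - 1)), (riccatiRhs p lam s)⁻¹ = y / K := by
  rw [← scaledCotPow_sinPHalf hp hy,
    integral_Ioi_inv_riccatiRhs_scaledCotPow hp hK hlam (sinPHalf_mem_Ioo hp hy),
    (sinPHalf_spec hp (Ioo_subset_Icc_self hy)).2]

end KeyIdentity

noncomputable def phiP (p v : ℝ) : ℝ := |v| ^ (p - 2) * v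

section PhiP

variable {p : ℝ}

@[simp] lemma phiP_zero : phiP p 0 = 0 := by simp [phiP]

lemma phiP_neg (v : ℝ) : phiP p (-v) = -phiP p v := by simp [phiP]

lemma phiP_pos {v : ℝ} (hv : 0 < v) : 0 < phiP p v :=
  mul_pos (Real.rpow_pos_of_pos (abs_pos.2 hv.ne') _) hv

lemma phiP_lt_zero {v : ℝ} (hv : v < 0) : phiP p v < 0 :=
  mul_neg_of_pos_of_neg (Real.rpow_pos_of_pos (abs_pos.2 hv.ne) _) hv

lemma phiP_ne_zero {v : ℝ} (hv : v ≠ 0) : phiP p v ≠ 0 :=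
  mul_ne_zero (Real.rpow_pos_of_pos (abs_pos.2 hv) _).ne' hv

lemma abs_phiP (hp : 1 < p) (v : ℝ) : |phiP p v| = |v| ^ (p - 1) := by
  rcases eq_or_ne v 0 with rfl | hv
  · simp [Real.zero_rpow (show p - 1 ≠ 0 by linarith)]
  · rw [phiP, abs_mul, abs_of_nonneg (Real.rpow_nonneg (abs_nonneg v) _),
      show p - 1 = p - 2 + 1 by ring, Real.rpow_add (abs_pos.2 hv), Real.rpow_one]

lemma abs_eq_abs_phiP_rpow (hp : 1 < p) (v : ℝ) : |v| = |phiP p v| ^ (1 / (p - 1)) := by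
  rw [abs_phiP hp, ← Real.rpow_mul (abs_nonneg v), mul_one_div_cancel (by linarith),
    Real.rpow_one]

lemma continuous_phiP (hp : 1 < p) : Continuous (phiP p) := by
  refine continuous_iff_continuousAt.2 fun v => ?_
  rcases eq_or_ne v 0 with rfl | hv
  · have hc : ContinuousAt (fun t : ℝ => |t| ^ (p - 1)) 0 :=
      continuous_abs.continuousAt.rpow_const (Or.inr (by linarith))
    have := hc.tendsto
    rw [abs_zero, Real.zero_rpow (by linarith)] at this
    rw [ContinuousAt, phiP_zero]
    exact squeeze_zero_norm (fun t => (abs_phiP hp t).le) this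
  · exact (continuous_abs.continuousAt.rpow_const (Or.inl (abs_ne_zero.2 hv))).mul
      continuousAt_id

lemma hasDerivAt_phiP {v : ℝ} (hv : v ≠ 0) :
    HasDerivAt (phiP p) ((p - 1) * |v| ^ (p - 2)) v := by
  rcases hv.lt_or_gt with hv | hv
  · have hd := ((Real.hasDerivAt_rpow_const (p := p - 1) (Or.inl (neg_pos.2 hv).ne')).comp v
      (hasDerivAt_neg v)).neg
    rw [abs_of_neg hv]
    refine (hd.congr_deriv (by ring_nf)).congr_of_eventuallyEq ?_
    filter_upwards [Iio_mem_nhds hv] with y (hy : y < 0)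
    change |y| ^ (p - 2) * y = -((-y) ^ (p - 1))
    rw [abs_of_neg hy, show p - 1 = p - 2 + 1 by ring,
      Real.rpow_add (neg_pos.2 hy), Real.rpow_one]
    ring
  · have hd := Real.hasDerivAt_rpow_const (p := p - 1) (Or.inl hv.ne')
    rw [abs_of_pos hv]
    refine (hd.congr_deriv (by ring_nf)).congr_of_eventuallyEq ?_
    filter_upwards [Ioi_mem_nhds hv] with y (hy : 0 < y)
    rw [phiP, abs_of_pos hy, show p - 1 = p - 2 + 1 by ring, Real.rpow_add hy, Real.rpow_one]

lemma tendsto_inv_phiP_atTop {x : ℝ} {u : ℝ → ℝ} {s : Set ℝ} {l : Filter ℝ} (hp : 1 < p)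
    (hu : ContinuousWithinAt u s x) (hux : u x = 0) (hl : l ≤ 𝓝[s] x)
    (hpos : ∀ᶠ t in l, 0 < u t) : Tendsto (fun t => (phiP p (u t))⁻¹) l atTop := by
  refine Tendsto.inv_tendsto_nhdsGT_zero (tendsto_nhdsWithin_iff.2 ⟨?_, ?_⟩)
  · simpa [hux, Function.comp_def] using
      ((continuous_phiP hp).continuousAt.comp_continuousWithinAt hu).tendsto.mono_left hl
  · filter_upwards [hpos] with t ht using phiP_pos ht

end PhiP

lemma abs_sub_le_of_hasDerivAt_of_abs_le {f f' : ℝ → ℝ} {C x y : ℝ}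
    (hf : ContinuousOn f (uIcc x y))
    (hf' : ∀ z ∈ Ioo (min x y) (max x y), HasDerivAt f (f' z) z)
    (hC : ∀ z ∈ Ioo (min x y) (max x y), |f' z| ≤ C) : |f y - f x| ≤ C * |y - x| := by
  wlog hxy : x ≤ y generalizing x y
  · rw [abs_sub_comm, abs_sub_comm y]
    rw [uIcc_comm, min_comm, max_comm] at *
    exact this hf hf' hC (le_of_not_ge hxy)
  rw [min_eq_left hxy, max_eq_right hxy] at *
  rw [uIcc_of_le hxy] at hf
  rcases hxy.eq_or_lt with rfl | hxy
  · simp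
  obtain ⟨z, hz, hslope⟩ := exists_hasDerivAt_eq_slope f f' hxy hf hf'
  rw [eq_div_iff (sub_pos.2 hxy).ne'] at hslope
  rw [← hslope, abs_mul, abs_of_pos (sub_pos.2 hxy)]
  exact mul_le_mul_of_nonneg_right (hC z hz) (sub_pos.2 hxy).le

lemma exists_pos_mul_rpow_lt_one {C e : ℝ} (he : 0 < e) : ∃ h, h * (C * h) ^ e < 1 ∧ 0 < h := by
  have hc : ContinuousAt (fun h : ℝ => h * (C * h) ^ e) 0 :=
    continuousAt_id.mul ((continuousAt_const.mul continuousAt_id).rpow_const (Or.inr he.le))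
  have := hc.tendsto
  rw [zero_mul] at this
  exact ((this.mono_left nhdsWithin_le_nhds).eventually (gt_mem_nhds one_pos) |>.and
    (self_mem_nhdsWithin (s := Ioi 0))).exists

section HalfLinear

variable {p α β : ℝ} {q u u' : ℝ → ℝ}

-- With `M = max |u|`, the equation gives `|u'| ≤ (C h)^(1/(p-1)) M` and then
-- `M ≤ h (C h)^(1/(p-1)) M`.
theorem eqOn_zero_of_halfLinear (hp : 1 < p) (hu' : ContinuousOn u' (Icc α β))
    (hu : ∀ x ∈ Icc α β, HasDerivWithinAt u (u' x) (Icc α β) x)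
    (hode : ∀ x ∈ Ioo α β, HasDerivAt (fun y => phiP p (u' y)) (-(q x * phiP p (u x))) x)
    {C h a : ℝ} (hC : ∀ x ∈ Icc α β, |q x| ≤ C) (hh : ∀ t ∈ Icc α β, |t - a| ≤ h)
    (hsmall : h * (C * h) ^ (1 / (p - 1)) < 1)
    (ha : a ∈ Icc α β) (hua : u a = 0) (hu'a : u' a = 0) : EqOn u 0 (Icc α β) := by
  have hp1 : 0 < p - 1 := by linarith
  have hC0 : 0 ≤ C := (abs_nonneg _).trans (hC a ha)
  have hh0 : 0 ≤ h := (abs_nonneg _).trans (hh a ha)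
  have hucont : ContinuousOn u (Icc α β) := fun x hx => (hu x hx).continuousWithinAt
  obtain ⟨τ, hτ, hmax⟩ := isCompact_Icc.exists_isMaxOn ⟨a, ha⟩ hucont.abs
  set M := |u τ|
  have hM0 : 0 ≤ M := abs_nonneg _
  have hmaxM : ∀ t ∈ Icc α β, |u t| ≤ M := fun t ht => hmax ht
  have hseg : ∀ t ∈ Icc α β, uIcc a t ⊆ Icc α β := fun t ht => ordConnected_Icc.uIcc_subset ha ht
  have hsegIoo : ∀ t ∈ Icc α β, Ioo (min a t) (max a t) ⊆ Ioo α β := fun t ht z hz =>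
    ⟨(le_min ha.1 ht.1).trans_lt hz.1, hz.2.trans_le (max_le ha.2 ht.2)⟩
  have hu'le : ∀ t ∈ Icc α β, |u' t| ≤ (C * h) ^ (1 / (p - 1)) * M := by
    intro t ht
    have hφ := abs_sub_le_of_hasDerivAt_of_abs_le (f := fun y => phiP p (u' y))
      ((continuous_phiP hp).comp_continuousOn (hu'.mono (hseg t ht)))
      (fun z hz => hode z (hsegIoo t ht hz)) (C := C * M ^ (p - 1)) fun z hz => by
        have hz' := Ioo_subset_Icc_self (hsegIoo t ht hz)
        rw [abs_neg, abs_mul, abs_phiP hp]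
        exact mul_le_mul (hC z hz') (Real.rpow_le_rpow (abs_nonneg _) (hmaxM z hz') hp1.le)
          (by positivity) hC0
    rw [hu'a, phiP_zero, sub_zero] at hφ
    calc |u' t| = |phiP p (u' t)| ^ (1 / (p - 1)) := abs_eq_abs_phiP_rpow hp _
      _ ≤ (C * M ^ (p - 1) * h) ^ (1 / (p - 1)) := Real.rpow_le_rpow (abs_nonneg _)
          (hφ.trans (mul_le_mul_of_nonneg_left (hh t ht) (by positivity))) (by positivity)
      _ = (C * h) ^ (1 / (p - 1)) * M := by
          rw [mul_right_comm, Real.mul_rpow (by positivity) (by positivity),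
            ← Real.rpow_mul hM0, mul_one_div_cancel hp1.ne', Real.rpow_one]
  have hMle : M ≤ h * (C * h) ^ (1 / (p - 1)) * M := by
    have hd := abs_sub_le_of_hasDerivAt_of_abs_le (hucont.mono (hseg τ hτ))
      (fun z hz => (hu z (Ioo_subset_Icc_self (hsegIoo τ hτ hz))).hasDerivAt
        (Icc_mem_nhds (hsegIoo τ hτ hz).1 (hsegIoo τ hτ hz).2))
      (fun z hz => hu'le z (Ioo_subset_Icc_self (hsegIoo τ hτ hz)))
    rw [hua, sub_zero] at hd
    calc M ≤ (C * h) ^ (1 / (p - 1)) * M * |τ - a| := hd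
      _ ≤ (C * h) ^ (1 / (p - 1)) * M * h :=
          mul_le_mul_of_nonneg_left (hh τ hτ) (by positivity)
      _ = h * (C * h) ^ (1 / (p - 1)) * M := by ring
  have hM : M = 0 := by nlinarith
  exact fun t ht => abs_nonpos_iff.1 ((hmaxM t ht).trans hM.le)

theorem eventuallyEq_zero_of_halfLinear (hp : 1 < p) (hq : ContinuousOn q (Icc α β))
    (hu' : ContinuousOn u' (Icc α β))
    (hu : ∀ x ∈ Icc α β, HasDerivWithinAt u (u' x) (Icc α β) x)
    (hode : ∀ x ∈ Ioo α β, HasDerivAt (fun y => phiP p (u' y)) (-(q x * phiP p (u x))) x)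
    {a : ℝ} (ha : a ∈ Icc α β) (hua : u a = 0) (hu'a : u' a = 0) :
    u =ᶠ[𝓝[Icc α β] a] 0 := by
  obtain ⟨C, hC⟩ := isCompact_Icc.exists_bound_of_continuousOn hq
  obtain ⟨h, hsmall, hh0⟩ := exists_pos_mul_rpow_lt_one (C := C) (one_div_pos.2 (sub_pos.2 hp))
  set J := Icc (max α (a - h)) (min β (a + h))
  have hJ : J ⊆ Icc α β := Icc_subset_Icc (le_max_left _ _) (min_le_left _ _)
  have hJmem : J ∈ 𝓝[Icc α β] a := by
    rw [show J = Icc α β ∩ Icc (a - h) (a + h) from Icc_inter_Icc.symm]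
    exact inter_mem self_mem_nhdsWithin
      (nhdsWithin_le_nhds (Icc_mem_nhds (by linarith) (by linarith)))
  filter_upwards [hJmem] with t ht
  refine eqOn_zero_of_halfLinear hp (hu'.mono hJ) (fun x hx => (hu x (hJ hx)).mono hJ)
    (fun x hx => hode x (Ioo_subset_Ioo (le_max_left _ _) (min_le_left _ _) hx))
    (fun x hx => by rw [← Real.norm_eq_abs]; exact hC x (hJ hx))
    (fun x hx => abs_sub_le_iff.2 ⟨by linarith [hx.2.trans (min_le_right _ _)],
      by linarith [(le_max_right _ _).trans hx.1]⟩) hsmall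
    ⟨max_le ha.1 (by linarith), le_min ha.2 (by linarith)⟩ hua hu'a ht

lemma deriv_ne_zero_of_nodal (hp : 1 < p) (hq : ContinuousOn q (Icc α β))
    (hu' : ContinuousOn u' (Icc α β))
    (hu : ∀ x ∈ Icc α β, HasDerivWithinAt u (u' x) (Icc α β) x)
    (hode : ∀ x ∈ Ioo α β, HasDerivAt (fun y => phiP p (u' y)) (-(q x * phiP p (u x))) x)
    (hαβ : α < β) (hpos : ∀ x ∈ Ioo α β, 0 < u x) {x : ℝ} (hx : x = α ∨ x = β) (hux : u x = 0) :
    u' x ≠ 0 := by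
  intro hu'x
  have hx' : x ∈ Icc α β := by rcases hx with rfl | rfl <;> simp [hαβ.le]
  have : (𝓝[Ioo α β] x).NeBot := by
    rcases hx with rfl | rfl
    exacts [left_nhdsWithin_Ioo_neBot hαβ, right_nhdsWithin_Ioo_neBot hαβ]
  obtain ⟨y, hy0, hy⟩ := (((eventuallyEq_zero_of_halfLinear hp hq hu' hu hode hx' hux hu'x
    ).filter_mono (nhdsWithin_mono _ Ioo_subset_Icc_self)).and self_mem_nhdsWithin).exists
  exact (hpos y hy).ne' hy0

lemma hasDerivAt_riccati (hp : 1 < p) {t k : ℝ} (hu : HasDerivAt u (u' t) t)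
    (hode : HasDerivAt (fun y => phiP p (u' y)) (-(k * phiP p (u t))) t) (hut : u t ≠ 0) :
    HasDerivAt (fun y => -phiP p (u' y) / phiP p (u y))
      (k + (p - 1) * |-phiP p (u' t) / phiP p (u t)| ^ (p / (p - 1))) t := by
  refine (hode.neg.div ((hasDerivAt_phiP hut).comp t hu) (phiP_ne_zero hut)).congr_deriv ?_
  have hsq : ∀ v : ℝ, |v| ^ (p - 2) * v ^ 2 = |v| ^ p := fun v => by
    rcases eq_or_ne v 0 with rfl | hv
    · simp [Real.zero_rpow (show p ≠ 0 by linarith)]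
    · rw [← sq_abs v, ← Real.rpow_natCast, ← Real.rpow_add (abs_pos.2 hv)]
      norm_num
  have hpow : |-phiP p (u' t) / phiP p (u t)| ^ (p / (p - 1)) = |u' t| ^ p / |u t| ^ p := by
    rw [abs_div, abs_neg, abs_phiP hp, abs_phiP hp, Real.div_rpow (by positivity) (by positivity),
      ← Real.rpow_mul (abs_nonneg _), ← Real.rpow_mul (abs_nonneg _),
      mul_div_cancel₀ _ (show p - 1 ≠ 0 by linarith)]
  have hA : 0 < |u t| ^ (p - 2) := Real.rpow_pos_of_pos (abs_pos.2 hut) _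
  rw [hpow, ← hsq (u t), ← hsq (u' t)]
  simp only [phiP, Pi.neg_apply, Function.comp_apply]
  field_simp
  ring

noncomputable def cutoffWeight (p lam c s : ℝ) : ℝ :=
  min (riccatiRhs p lam c) (riccatiRhs p lam s) / riccatiRhs p lam s

noncomputable def cutoffPrimitive (p lam c y : ℝ) : ℝ := ∫ s in (0 : ℝ)..y, cutoffWeight p lam c s

section Cutoff

variable {p lam c : ℝ}

lemma continuous_cutoffWeight (hp : 1 < p) (hlam : 0 < lam) : Continuous (cutoffWeight p lam c) :=
  (continuous_const.min (continuous_riccatiRhs hp)).div (continuous_riccatiRhs hp)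
    fun s => (riccatiRhs_pos hp hlam s).ne'

lemma cutoffWeight_mul_add_le (hp : 1 < p) (hlam : 0 < lam) (s ρ : ℝ) :
    cutoffWeight p lam c s * (riccatiRhs p lam s + ρ) ≤
      min (riccatiRhs p lam c) (riccatiRhs p lam s) + max ρ 0 := by
  have hF := riccatiRhs_pos hp hlam s
  have hw0 : 0 ≤ cutoffWeight p lam c s :=
    div_nonneg (le_min (riccatiRhs_pos hp hlam c).le hF.le) hF.le
  have hw1 : cutoffWeight p lam c s ≤ 1 := div_le_one_of_le₀ (min_le_right _ _) hF.le
  have hmul : cutoffWeight p lam c s * riccatiRhs p lam s =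
      min (riccatiRhs p lam c) (riccatiRhs p lam s) := div_mul_cancel₀ _ hF.ne'
  rw [mul_add, hmul]
  gcongr _ + ?_
  rcases le_total 0 ρ with hρ | hρ
  · exact (mul_le_of_le_one_left hρ hw1).trans (le_max_left _ _)
  · exact (mul_nonpos_of_nonneg_of_nonpos hw0 hρ).trans (le_max_right _ _)

lemma hasDerivAt_cutoffPrimitive (hp : 1 < p) (hlam : 0 < lam) (y : ℝ) :
    HasDerivAt (cutoffPrimitive p lam c) (cutoffWeight p lam c y) y :=
  have hw := continuous_cutoffWeight (c := c) hp hlam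
  intervalIntegral.integral_hasDerivAt_right (hw.intervalIntegrable _ _)
    (hw.stronglyMeasurableAtFilter _ _) hw.continuousAt

lemma cutoffPrimitive_eq (hp : 1 < p) (hlam : 0 < lam) (hc : 0 < c) {y : ℝ} (hy : c ≤ y) :
    cutoffPrimitive p lam c y = c + riccatiRhs p lam c * ∫ s in c..y, (riccatiRhs p lam s)⁻¹ := by
  have hw := continuous_cutoffWeight (c := c) hp hlam
  have hsmall : ∫ s in (0 : ℝ)..c, cutoffWeight p lam c s = c := by
    rw [intervalIntegral.integral_congr (g := fun _ => (1 : ℝ)), intervalIntegral.integral_const,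
      smul_eq_mul, mul_one, sub_zero]
    intro s hs
    rw [uIcc_of_le hc.le] at hs
    rw [cutoffWeight, min_eq_right (riccatiRhs_le_riccatiRhs hp hs.1 hs.2),
      div_self (riccatiRhs_pos hp hlam s).ne']
  have hlarge : ∫ s in c..y, cutoffWeight p lam c s =
      riccatiRhs p lam c * ∫ s in c..y, (riccatiRhs p lam s)⁻¹ := by
    rw [← intervalIntegral.integral_const_mul]
    refine intervalIntegral.integral_congr fun s hs => ?_
    rw [uIcc_of_le hy] at hs
    rw [cutoffWeight, min_eq_left (riccatiRhs_le_riccatiRhs hp hc.le hs.1), div_eq_mul_inv]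
  rw [cutoffPrimitive, ← intervalIntegral.integral_add_adjacent_intervals
    (hw.intervalIntegrable 0 c) (hw.intervalIntegrable c y), hsmall, hlarge]

lemma cutoffPrimitive_neg (y : ℝ) : cutoffPrimitive p lam c (-y) = -cutoffPrimitive p lam c y := by
  have heven : ∀ s, cutoffWeight p lam c (-s) = cutoffWeight p lam c s := fun s => by
    simp only [cutoffWeight, riccatiRhs_neg]
  rw [cutoffPrimitive, cutoffPrimitive, ← neg_zero, ← intervalIntegral.integral_comp_neg,
    intervalIntegral.integral_symm, neg_zero]
  simp only [heven]

lemma tendsto_cutoffPrimitive_atTop (hp : 1 < p) (hlam : 0 < lam) (hc : 0 < c) :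
    Tendsto (cutoffPrimitive p lam c) atTop
      (𝓝 (c + riccatiRhs p lam c * ∫ s in Ioi c, (riccatiRhs p lam s)⁻¹)) := by
  refine ((intervalIntegral_tendsto_integral_Ioi c (integrableOn_inv_riccatiRhs hp hlam hc)
    tendsto_id).const_mul _ |>.const_add c).congr' ?_
  filter_upwards [eventually_ge_atTop c] with y hy using (cutoffPrimitive_eq hp hlam hc hy).symm

lemma tendsto_cutoffPrimitive_atBot (hp : 1 < p) (hlam : 0 < lam) (hc : 0 < c) :
    Tendsto (cutoffPrimitive p lam c) atBot
      (𝓝 (-(c + riccatiRhs p lam c * ∫ s in Ioi c, (riccatiRhs p lam s)⁻¹))) :=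
  ((tendsto_cutoffPrimitive_atTop hp hlam hc).comp tendsto_neg_atBot_atTop).neg.congr fun y => by
    simp [cutoffPrimitive_neg]

end Cutoff

theorem lt_of_tendsto_of_hasDerivAt_nonpos {H H' : ℝ → ℝ} {a b t₀ La Lb : ℝ}
    (hH : ∀ t ∈ Ioo a b, HasDerivAt H (H' t) t) (hH'le : ∀ t ∈ Ioo a b, H' t ≤ 0)
    (ht₀ : t₀ ∈ Ioo a b) (hH't₀ : H' t₀ < 0)
    (ha : Tendsto H (𝓝[>] a) (𝓝 La)) (hb : Tendsto H (𝓝[<] b) (𝓝 Lb)) : Lb < La := by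
  have hanti : AntitoneOn H (Ioo a b) := by
    refine antitoneOn_of_hasDerivWithinAt_nonpos (f' := H') (convex_Ioo a b)
      (fun t ht => (hH t ht).continuousAt.continuousWithinAt) (fun t ht => ?_) (fun t ht => ?_)
    all_goals rw [interior_Ioo] at ht
    exacts [(hH t ht).hasDerivWithinAt, hH'le t ht]
  obtain ⟨t₁, hslope, ht₁⟩ := (((hH t₀ ht₀).hasDerivWithinAt.limsup_slope_le' (s := Ioi t₀)
    (lt_irrefl t₀) hH't₀).and (Ioo_mem_nhdsGT ht₀.2)).exists
  have hdrop : H t₁ < H t₀ := by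
    rw [slope_def_field, div_neg_iff] at hslope
    rcases hslope with ⟨-, h⟩ | ⟨h, -⟩
    · exact absurd ht₁.1 (not_lt.2 (sub_nonpos.1 h.le))
    · linarith
  have ht₁' : t₁ ∈ Ioo a b := ⟨ht₀.1.trans ht₁.1, ht₁.2⟩
  calc Lb ≤ H t₁ := by
        refine le_of_tendsto hb ?_
        filter_upwards [Ioo_mem_nhdsLT ht₁.2] with t ht
        exact hanti ht₁' ⟨ht₁'.1.trans ht.1, ht.2⟩ ht.1.le
    _ < H t₀ := hdrop
    _ ≤ La := by
        refine ge_of_tendsto ha ?_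
        filter_upwards [Ioo_mem_nhdsGT ht₀.1] with t ht
        exact hanti ⟨ht.1, ht.2.trans ht₀.2⟩ ht₀ ht.2.le

lemma exists_eq_zero_of_tendsto_atBot_atTop {w : ℝ → ℝ} {a b : ℝ} (hab : a < b)
    (hw : ContinuousOn w (Ioo a b)) (hwa : Tendsto w (𝓝[>] a) atBot)
    (hwb : Tendsto w (𝓝[<] b) atTop) : ∃ t ∈ Ioo a b, w t = 0 := by
  have := left_nhdsWithin_Ioo_neBot hab
  have := right_nhdsWithin_Ioo_neBot hab
  exact isPreconnected_Ioo.intermediate_value_Iii (l₁ := 𝓝[Ioo a b] a) (l₂ := 𝓝[Ioo a b] b)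
    inf_le_right inf_le_right hw (by rwa [nhdsWithin_Ioo_eq_nhdsGT hab])
    (by rwa [nhdsWithin_Ioo_eq_nhdsLT hab]) (mem_univ 0)

lemma continuousOn_primitive_of_continuousOn {f : ℝ → ℝ} {a b : ℝ} (hab : a ≤ b)
    (hf : ContinuousOn f (Icc a b)) : ContinuousOn (fun x => ∫ y in a..x, f y) (Icc a b) := by
  have := intervalIntegral.continuousOn_primitive_interval (μ := volume) (a := a) (b := b)
    (by rw [uIcc_of_le hab]; exact hf.integrableOn_Icc)
  rwa [uIcc_of_le hab] at this

lemma hasDerivAt_primitive_of_continuousOn {f : ℝ → ℝ} {a b t : ℝ}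
    (hf : ContinuousOn f (Icc a b)) (ht : t ∈ Ioo a b) :
    HasDerivAt (fun x => ∫ y in a..x, f y) (f t) t :=
  intervalIntegral.integral_hasDerivAt_right
    ((hf.mono (Icc_subset_Icc le_rfl ht.2.le)).intervalIntegrable_of_Icc ht.1.le)
    ((hf.mono Ioo_subset_Icc_self).stronglyMeasurableAtFilter isOpen_Ioo t ht)
    (hf.continuousAt (Icc_mem_nhds ht.1 ht.2))

section Riccati

variable {p lam c : ℝ}

theorem lt_integral_posPart_of_riccati (hp : 1 < p) (hlam : 0 < lam) (hc : 0 < c)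
    {a b : ℝ} (hab : a < b) {r w : ℝ → ℝ} (hr : ContinuousOn r (Icc a b))
    (hw : ∀ t ∈ Ioo a b, HasDerivAt w (riccatiRhs p lam (w t) + r t) t)
    (hwa : Tendsto w (𝓝[>] a) atBot) (hwb : Tendsto w (𝓝[<] b) atTop) :
    2 * (c + riccatiRhs p lam c * ∫ s in Ioi c, (riccatiRhs p lam s)⁻¹) <
      riccatiRhs p lam c * (b - a) + ∫ x in a..b, max (r x) 0 := by
  set L := c + riccatiRhs p lam c * ∫ s in Ioi c, (riccatiRhs p lam s)⁻¹
  set R : ℝ → ℝ := fun t => ∫ x in a..t, max (r x) 0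
  have hrPos : ContinuousOn (fun x => max (r x) 0) (Icc a b) :=
    continuous_max.comp_continuousOn (hr.prodMk continuousOn_const)
  have hR := continuousOn_primitive_of_continuousOn hab.le hrPos
  obtain ⟨t₀, ht₀, hwt₀⟩ := exists_eq_zero_of_tendsto_atBot_atTop hab
    (fun t ht => (hw t ht).continuousAt.continuousWithinAt) hwa hwb
  set H : ℝ → ℝ := fun t => cutoffPrimitive p lam c (w t) - riccatiRhs p lam c * t - R t
  have hH : ∀ t ∈ Ioo a b, HasDerivAt H (cutoffWeight p lam c (w t) *
      (riccatiRhs p lam (w t) + r t) - riccatiRhs p lam c * 1 - max (r t) 0) t := fun t ht =>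
    (((hasDerivAt_cutoffPrimitive hp hlam _).comp t (hw t ht)).sub
      ((hasDerivAt_id' t).const_mul _)).sub (hasDerivAt_primitive_of_continuousOn hrPos ht)
  have hlin : ∀ x, Tendsto (fun t => riccatiRhs p lam c * t) (𝓝 x) (𝓝 (riccatiRhs p lam c * x)) :=
    fun x => (continuous_const_mul _).tendsto x
  have hHa : Tendsto H (𝓝[>] a) (𝓝 (-L - riccatiRhs p lam c * a - R a)) :=
    (((tendsto_cutoffPrimitive_atBot hp hlam hc).comp hwa).sub
      ((hlin a).mono_left nhdsWithin_le_nhds)).sub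
      ((hR a ⟨le_rfl, hab.le⟩).mono_of_mem_nhdsWithin (Icc_mem_nhdsGT hab)).tendsto
  have hHb : Tendsto H (𝓝[<] b) (𝓝 (L - riccatiRhs p lam c * b - R b)) :=
    (((tendsto_cutoffPrimitive_atTop hp hlam hc).comp hwb).sub
      ((hlin b).mono_left nhdsWithin_le_nhds)).sub
      ((hR b ⟨hab.le, le_rfl⟩).mono_of_mem_nhdsWithin (Icc_mem_nhdsLT hab)).tendsto
  have key := lt_of_tendsto_of_hasDerivAt_nonpos hH
    (fun t _ => by
      have := cutoffWeight_mul_add_le (c := c) hp hlam (w t) (r t)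
      linarith [min_le_left (riccatiRhs p lam c) (riccatiRhs p lam (w t))])
    ht₀
    (by
      have := cutoffWeight_mul_add_le (c := c) hp hlam (w t₀) (r t₀)
      rw [hwt₀, riccatiRhs_zero hp] at this ⊢
      linarith [min_le_right (riccatiRhs p lam c) lam, lt_riccatiRhs (lam := lam) hp hc.ne'])
    hHa hHb
  simp only [R, intervalIntegral.integral_same] at key
  linarith

end Riccati

lemma exists_zero_pos_on_Ioc {u : ℝ → ℝ} {α x₀ : ℝ} (hαx : α ≤ x₀)
    (hu : ContinuousOn u (Icc α x₀)) (hα : u α = 0) (hx₀ : 0 < u x₀) :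
    ∃ a ∈ Ico α x₀, u a = 0 ∧ ∀ x ∈ Ioc a x₀, 0 < u x := by
  set S := Icc α x₀ ∩ u ⁻¹' {0}
  have hbdd : BddAbove S := bddAbove_Icc.mono inter_subset_left
  obtain ⟨⟨ha, hax⟩, hua : u (sSup S) = 0⟩ :=
    (hu.preimage_isClosed_of_isClosed isClosed_Icc isClosed_singleton).csSup_mem
      ⟨α, ⟨le_rfl, hαx⟩, hα⟩ hbdd
  refine ⟨sSup S, ⟨ha, hax.lt_of_ne fun h => hx₀.ne' (h ▸ hua)⟩, hua, fun x hx => ?_⟩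
  by_contra! hux
  obtain ⟨z, hz, huz⟩ := intermediate_value_Icc hx.2
    (hu.mono (Icc_subset_Icc (ha.trans hx.1.le) le_rfl)) ⟨hux, hx₀.le⟩
  exact (hx.1.trans_le hz.1).not_ge (le_csSup hbdd ⟨⟨ha.trans (hx.1.le.trans hz.1), hz.2⟩, huz⟩)

lemma exists_nodal_interval {u : ℝ → ℝ} {α β x₀ : ℝ} (hu : ContinuousOn u (Icc α β))
    (hα : u α = 0) (hβ : u β = 0) (hx₀ : x₀ ∈ Icc α β) (hpos : 0 < u x₀) :
    ∃ a b, α ≤ a ∧ a < b ∧ b ≤ β ∧ u a = 0 ∧ u b = 0 ∧ ∀ x ∈ Ioo a b, 0 < u x := by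
  obtain ⟨a, ⟨hαa, hax⟩, hua, hpa⟩ :=
    exists_zero_pos_on_Ioc hx₀.1 (hu.mono (Icc_subset_Icc le_rfl hx₀.2)) hα hpos
  obtain ⟨b', ⟨hβb, hbx⟩, hub, hpb⟩ := exists_zero_pos_on_Ioc (u := fun x => u (-x))
    (neg_le_neg hx₀.2)
    (hu.comp continuousOn_neg fun x hx => ⟨by linarith [hx.2, hx₀.1], by linarith [hx.1]⟩)
    (by simpa using hβ) (by simpa using hpos)
  refine ⟨a, -b', hαa, hax.trans (lt_neg_of_lt_neg hbx), neg_le.1 hβb, hua, hub,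
    fun x hx => ?_⟩
  rcases le_or_gt x x₀ with h | h
  · exact hpa x ⟨hx.1, h⟩
  · simpa using hpb (-x) ⟨by linarith [hx.2], by linarith⟩

lemma nonneg_of_hasDerivWithinAt_of_pos_right {f : ℝ → ℝ} {f' a b : ℝ} {s : Set ℝ}
    (hf : HasDerivWithinAt f f' s a) (hab : a < b) (hs : Ioo a b ⊆ s) (ha : f a = 0)
    (hpos : ∀ x ∈ Ioo a b, 0 < f x) : 0 ≤ f' := by
  have := left_nhdsWithin_Ioo_neBot hab
  refine ge_of_tendsto ((hasDerivWithinAt_iff_tendsto_slope' (s := Ioo a b)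
    fun h => lt_irrefl a h.1).1 (hf.mono hs))
    (eventually_nhdsWithin_of_forall fun x hx => ?_)
  rw [slope_def_field, ha, sub_zero]
  exact div_nonneg (hpos x hx).le (sub_nonneg.2 hx.1.le)

lemma nonpos_of_hasDerivWithinAt_of_pos_left {f : ℝ → ℝ} {f' a b : ℝ} {s : Set ℝ}
    (hf : HasDerivWithinAt f f' s b) (hab : a < b) (hs : Ioo a b ⊆ s) (hb : f b = 0)
    (hpos : ∀ x ∈ Ioo a b, 0 < f x) : f' ≤ 0 := by
  have := right_nhdsWithin_Ioo_neBot hab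
  refine le_of_tendsto ((hasDerivWithinAt_iff_tendsto_slope' (s := Ioo a b)
    fun h => lt_irrefl b h.2).1 (hf.mono hs))
    (eventually_nhdsWithin_of_forall fun x hx => ?_)
  rw [slope_def_field, hb, sub_zero]
  exact div_nonpos_of_nonneg_of_nonpos (hpos x hx).le (sub_nonpos.2 hx.2.le)

section Nodal

variable {p lam c a b : ℝ} {r u u' : ℝ → ℝ}

theorem lt_integral_posPart_of_nodal (hp : 1 < p) (hlam : 0 < lam) (hc : 0 < c) (hab : a < b)
    (hr : ContinuousOn r (Icc a b)) (hu' : ContinuousOn u' (Icc a b))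
    (hu : ∀ x ∈ Icc a b, HasDerivWithinAt u (u' x) (Icc a b) x)
    (hode : ∀ x ∈ Ioo a b,
      HasDerivAt (fun y => phiP p (u' y)) (-((lam + r x) * phiP p (u x))) x)
    (hua : u a = 0) (hub : u b = 0) (hpos : ∀ x ∈ Ioo a b, 0 < u x) :
    2 * (c + riccatiRhs p lam c * ∫ s in Ioi c, (riccatiRhs p lam s)⁻¹) <
      riccatiRhs p lam c * (b - a) + ∫ x in a..b, max (r x) 0 := by
  have hq : ContinuousOn (fun x => lam + r x) (Icc a b) := continuousOn_const.add hr
  have ha : a ∈ Icc a b := ⟨le_rfl, hab.le⟩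
  have hb : b ∈ Icc a b := ⟨hab.le, le_rfl⟩
  have hla : 𝓝[>] a ≤ 𝓝[Icc a b] a := nhdsWithin_le_of_mem (Icc_mem_nhdsGT hab)
  have hlb : 𝓝[<] b ≤ 𝓝[Icc a b] b := nhdsWithin_le_of_mem (Icc_mem_nhdsLT hab)
  have hu'a : 0 < u' a :=
    (nonneg_of_hasDerivWithinAt_of_pos_right (hu a ha) hab Ioo_subset_Icc_self hua hpos).lt_of_ne'
      (deriv_ne_zero_of_nodal hp hq hu' hu hode hab hpos (Or.inl rfl) hua)
  have hu'b : u' b < 0 :=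
    (nonpos_of_hasDerivWithinAt_of_pos_left (hu b hb) hab Ioo_subset_Icc_self hub hpos).lt_of_ne
      (deriv_ne_zero_of_nodal hp hq hu' hu hode hab hpos (Or.inr rfl) hub)
  have hN : ∀ x ∈ Icc a b, Tendsto (fun t => -phiP p (u' t)) (𝓝[Icc a b] x)
      (𝓝 (-phiP p (u' x))) := fun x hx =>
    ((continuous_phiP hp).continuousAt.comp_continuousWithinAt (hu' x hx)).tendsto.neg
  refine lt_integral_posPart_of_riccati hp hlam hc hab hr
    (w := fun t => -phiP p (u' t) / phiP p (u t)) (fun t ht => ?_) ?_ ?_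
  · refine (hasDerivAt_riccati hp ((hu t (Ioo_subset_Icc_self ht)).hasDerivAt
      (Icc_mem_nhds ht.1 ht.2)) (hode t ht) (hpos t ht).ne').congr_deriv ?_
    simp only [riccatiRhs]
    ring
  · exact (((hN a ha).mono_left hla).neg_mul_atTop (neg_lt_zero.2 (phiP_pos hu'a))
      (tendsto_inv_phiP_atTop hp (hu a ha).continuousWithinAt hua hla
        (eventually_of_mem (Ioo_mem_nhdsGT hab) hpos))).congr fun t => (div_eq_mul_inv _ _).symm
  · exact (((hN b hb).mono_left hlb).pos_mul_atTop (neg_pos.2 (phiP_lt_zero hu'b))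
      (tendsto_inv_phiP_atTop hp (hu b hb).continuousWithinAt hub hlb
        (eventually_of_mem (Ioo_mem_nhdsLT hab) hpos))).congr fun t => (div_eq_mul_inv _ _).symm

end Nodal

lemma IsNontrivialSolution.neg {p lam : ℝ} {r u u' : ℝ → ℝ}
    (h : IsNontrivialSolution p lam r u u') : IsNontrivialSolution p lam r (-u) (-u') := by
  obtain ⟨⟨x, hx, hux⟩, hu'c, hu, hu0, huπ, hode⟩ := h
  refine ⟨⟨x, hx, by simpa using hux⟩, hu'c.neg, fun x hx => (hu x hx).neg, by simp [hu0],
    by simp [huπ], fun x hx => ?_⟩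
  change HasDerivAt (fun y => phiP p (-u' y)) (-((lam + r x) * |-u x| ^ (p - 2) * -u x)) x
  simp only [phiP_neg, abs_neg]
  exact (hode x hx).neg.congr_deriv (by ring)

lemma mem_Ioo_and_eq_mul_rpow {p lam K : ℝ} (hp : 1 < p) (hlam0 : 0 < lam) (hlam1 : lam < p - 1)
    (hK : K = (lam / (p - 1)) ^ (1 / p)) : K ∈ Ioo 0 1 ∧ lam = (p - 1) * K ^ p := by
  have hp1 : 0 < p - 1 := by linarith
  refine ⟨⟨hK ▸ by positivity, hK ▸ Real.rpow_lt_one (by positivity) ((div_lt_one hp1).2 hlam1)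
    (by positivity)⟩, ?_⟩
  rw [hK, ← Real.rpow_mul (by positivity), one_div_mul_cancel (by linarith), Real.rpow_one]
  field_simp

/-- Lyapunov-type inequality for `0 < λ < p - 1`: if the BVP
`(|u'|^(p-2)u')' + (λ + r)|u|^(p-2)u = 0`, `u(0) = u(π_p) = 0` has a nontrivial solution,
then `∫₀^{π_p} r₊ > 2 K^(p-1) (cot_p (K π_p / 2))^(p-1)` where `K = (λ/(p-1))^(1/p)`. -/
theorem lyapunov_pos_lambda (p lam K : ℝ) (hp : 1 < p)
    (hlam0 : 0 < lam) (hlam1 : lam < p - 1)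
    (hK : K = (lam / (p - 1)) ^ (1 / p))
    (r u u' : ℝ → ℝ) (hr : ContinuousOn r (Set.Icc 0 (piP p)))
    (hsol : IsNontrivialSolution p lam r u u') :
    (∫ x in (0:ℝ)..piP p, max (r x) 0) >
      2 * K ^ (p - 1) * (cotP p (K * piP p / 2)) ^ (p - 1) := by
  wlog hpos : ∃ x ∈ Icc 0 (piP p), 0 < u x generalizing u u'
  · obtain ⟨x, hx, hux⟩ := hsol.1
    exact this (-u) (-u') hsol.neg
      ⟨x, hx, neg_pos.2 (hux.lt_or_gt.resolve_right fun h => hpos ⟨x, hx, h⟩)⟩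
  obtain ⟨-, hu'c, hu, hu0, huπ, hode⟩ := hsol
  obtain ⟨x₀, hx₀, hux₀⟩ := hpos
  obtain ⟨a, b, h0a, hab, hbπ, hua, hub, hupos⟩ :=
    exists_nodal_interval (fun x hx => (hu x hx).continuousWithinAt) hu0 huπ hx₀ hux₀
  have hsub : Icc a b ⊆ Icc 0 (piP p) := Icc_subset_Icc h0a hbπ
  have hπ := piP_pos hp
  obtain ⟨⟨hK0, hK1⟩, hlamK⟩ := mem_Ioo_and_eq_mul_rpow hp hlam0 hlam1 hK
  have hy : K * piP p / 2 ∈ Ioo 0 (piP p / 2) := ⟨by positivity, by nlinarith⟩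
  have hc : 0 < K ^ (p - 1) * cotP p (K * piP p / 2) ^ (p - 1) :=
    scaledCotPow_sinPHalf hp hy ▸ scaledCotPow_pos hp hK0 (sinPHalf_mem_Ioo hp hy)
  have hbound := lt_integral_posPart_of_nodal hp hlam0 hc hab (hr.mono hsub) (hu'c.mono hsub)
    (fun x hx => (hu x (hsub hx)).mono hsub)
    (fun x hx => hode x ⟨h0a.trans_lt hx.1, hx.2.trans_le hbπ⟩ |>.congr_deriv (by rw [phiP]; ring))
    hua hub hupos
  rw [integral_Ioi_inv_riccatiRhs_cotP hp hK0 hlamK hy, show K * piP p / 2 / K = piP p / 2 by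
    field_simp] at hbound
  have hmono : ∫ x in a..b, max (r x) 0 ≤ ∫ x in (0 : ℝ)..piP p, max (r x) 0 :=
    intervalIntegral.integral_mono_interval h0a hab.le hbπ (ae_of_all _ fun _ => le_max_right _ _)
      ((continuous_max.comp_continuousOn (hr.prodMk continuousOn_const)).intervalIntegrable_of_Icc
        hπ.le)
  nlinarith [riccatiRhs_pos hp hlam0 (K ^ (p - 1) * cotP p (K * piP p / 2) ^ (p - 1))]
end HalfLinear
end

section
/- Let 1 < p < ∞. For every z ≥ 0, ∫₀^z (cosh_p(t))^p dt = (1/p)·((p−1)·z + (cosh_p(z))^{p−1}·sinh_p(z)). -/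
/-- `arcsinh_p x = ∫₀ˣ (1 + tᵖ)^(-1/p) dt`. -/
noncomputable def arcsinhP (p x : ℝ) : ℝ := ∫ t in (0:ℝ)..x, (1 + t ^ p) ^ (-(1 / p))

/-- `sinh_p : [0,∞) → [0,∞)`, defined as the inverse of `arcsinh_p` on `[0,∞)`. -/
noncomputable def sinhP (p : ℝ) : ℝ → ℝ := Function.invFunOn (arcsinhP p) (Set.Ici 0)

/-- `cosh_p x = (1 + sinh_p x ^ p)^(1/p)`. -/
noncomputable def coshP (p x : ℝ) : ℝ := (1 + sinhP p x ^ p) ^ (1 / p)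

/-- `coth_p x = cosh_p x / sinh_p x`. -/
noncomputable def cothP (p x : ℝ) : ℝ := coshP p x / sinhP p x

/-!
`arcsinhP p` is continuous and strictly increasing on `[0, ∞)`, and unbounded because
`(1 + tᵖ)^(1/p) ≤ 1 + t` gives `log (1 + x) ≤ arcsinhP p x`; hence it is a bijection of `[0, ∞)`,
its inverse `sinhP p` is continuous, and the inverse function theorem gives `sinhP' = coshP`.
With `s = sinhP p` and `c = coshP p = (1 + sᵖ)^(1/p)`, the chain rule gives
`(c^(p-1) s)' = (p - 1) sᵖ + cᵖ = p cᵖ - (p - 1)`, so the right-hand side is a primitive of `cᵖ`.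
-/

open Set Real intervalIntegral

section

variable {p : ℝ}

lemma one_add_rpow_pos {t : ℝ} (ht : 0 ≤ t) : 0 < 1 + t ^ p := by positivity

lemma continuousOn_one_add_rpow_rpow (hp : 0 ≤ p) (r : ℝ) :
    ContinuousOn (fun t : ℝ => (1 + t ^ p) ^ r) (Ici 0) :=
  (continuousOn_const.add (continuousOn_id.rpow_const fun _ _ => Or.inr hp)).rpow_const
    fun _ ht => Or.inl (one_add_rpow_pos ht).ne'

lemma intervalIntegrable_one_add_rpow_rpow (hp : 0 ≤ p) (r : ℝ) {a b : ℝ} (ha : 0 ≤ a)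
    (hb : 0 ≤ b) : IntervalIntegrable (fun t : ℝ => (1 + t ^ p) ^ r) MeasureTheory.volume a b :=
  ((continuousOn_one_add_rpow_rpow hp r).mono
    fun _ ht => le_trans (le_min ha hb) ht.1).intervalIntegrable

lemma arcsinhP_zero : arcsinhP p 0 = 0 := integral_same

lemma continuousOn_arcsinhP (hp : 0 ≤ p) : ContinuousOn (arcsinhP p) (Ici 0) := by
  intro x (hx : 0 ≤ x)
  have hI : ContinuousOn (arcsinhP p) (Icc 0 (x + 1)) := by
    rw [← uIcc_of_le (by linarith : (0 : ℝ) ≤ x + 1)]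
    exact continuousOn_primitive_interval'
      (intervalIntegrable_one_add_rpow_rpow hp _ le_rfl (by linarith)) left_mem_uIcc
  refine (hI x ⟨hx, by linarith⟩).mono_of_mem_nhdsWithin ?_
  rw [← Ici_inter_Iic]
  exact inter_mem_nhdsWithin _ (Iic_mem_nhds (by linarith))

lemma hasDerivAt_arcsinhP (hp : 0 ≤ p) {x : ℝ} (hx : 0 < x) :
    HasDerivAt (arcsinhP p) ((1 + x ^ p) ^ (-(1 / p))) x := by
  have hcont := (continuousOn_one_add_rpow_rpow hp (-(1 / p))).mono (Ioi_subset_Ici_self (a := 0))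
  exact integral_hasDerivAt_right (intervalIntegrable_one_add_rpow_rpow hp _ le_rfl hx.le)
    (hcont.stronglyMeasurableAtFilter isOpen_Ioi x hx) (hcont.continuousAt (Ioi_mem_nhds hx))

lemma strictMonoOn_arcsinhP (hp : 0 ≤ p) : StrictMonoOn (arcsinhP p) (Ici 0) := by
  refine strictMonoOn_of_deriv_pos (convex_Ici 0) (continuousOn_arcsinhP hp) fun x hx => ?_
  rw [interior_Ici] at hx
  rw [(hasDerivAt_arcsinhP hp hx).deriv]
  exact rpow_pos_of_pos (one_add_rpow_pos hx.le) _

lemma log_one_add_le_arcsinhP (hp : 1 ≤ p) {x : ℝ} (hx : 0 ≤ x) :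
    log (1 + x) ≤ arcsinhP p x := by
  have hbound : ∀ t ∈ Icc 0 x, (1 + t)⁻¹ ≤ (1 + t ^ p) ^ (-(1 / p)) := fun t ht => by
    rw [rpow_neg (one_add_rpow_pos ht.1).le]
    refine inv_anti₀ (rpow_pos_of_pos (one_add_rpow_pos ht.1) _) ?_
    simpa only [one_rpow] using rpow_add_rpow_le_add zero_le_one ht.1 hp
  calc log (1 + x) = ∫ t in 0..x, (1 + t)⁻¹ := by
        rw [integral_comp_add_left (fun t => t⁻¹), add_zero,
          integral_inv_of_pos one_pos (by linarith), div_one]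
    _ ≤ arcsinhP p x := integral_mono_on hx
        (ContinuousOn.intervalIntegrable_of_Icc hx (continuousOn_const.add continuousOn_id |>.inv₀
          fun t ht => by simp only [Pi.add_apply, id]; linarith [ht.1]))
        (intervalIntegrable_one_add_rpow_rpow (zero_le_one.trans hp) _ le_rfl hx) hbound

lemma arcsinhP_bijOn (hp : 1 ≤ p) : BijOn (arcsinhP p) (Ici 0) (Ici 0) := by
  have hp0 : 0 ≤ p := zero_le_one.trans hp
  refine ⟨fun x (hx : 0 ≤ x) => ?_, (strictMonoOn_arcsinhP hp0).injOn, fun y (hy : 0 ≤ y) => ?_⟩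
  · exact (log_nonneg (by linarith)).trans (log_one_add_le_arcsinhP hp hx)
  · have hb : 0 ≤ exp y - 1 := by linarith [add_one_le_exp y]
    have hyb : y ≤ arcsinhP p (exp y - 1) := by
      simpa using log_one_add_le_arcsinhP hp hb
    obtain ⟨x, hx, rfl⟩ := intermediate_value_Icc hb
      ((continuousOn_arcsinhP hp0).mono Icc_subset_Ici_self)
      (by rw [arcsinhP_zero]; exact ⟨hy, hyb⟩)
    exact ⟨x, hx.1, rfl⟩

lemma sinhP_invOn (hp : 1 ≤ p) : InvOn (sinhP p) (arcsinhP p) (Ici 0) (Ici 0) :=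
  (arcsinhP_bijOn hp).invOn_invFunOn

lemma sinhP_bijOn (hp : 1 ≤ p) : BijOn (sinhP p) (Ici 0) (Ici 0) :=
  (arcsinhP_bijOn hp).symm (sinhP_invOn hp).symm

lemma sinhP_nonneg (hp : 1 ≤ p) {x : ℝ} (hx : 0 ≤ x) : 0 ≤ sinhP p x :=
  (sinhP_bijOn hp).mapsTo hx

lemma sinhP_zero (hp : 1 ≤ p) : sinhP p 0 = 0 := by
  simpa only [arcsinhP_zero] using (sinhP_invOn hp).1 (self_mem_Ici : (0 : ℝ) ∈ Ici 0)

lemma strictMonoOn_sinhP (hp : 1 ≤ p) : StrictMonoOn (sinhP p) (Ici 0) := by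
  intro a ha b hb hab
  rwa [← (strictMonoOn_arcsinhP (zero_le_one.trans hp)).lt_iff_lt (sinhP_nonneg hp ha)
    (sinhP_nonneg hp hb), (sinhP_invOn hp).2 ha, (sinhP_invOn hp).2 hb]

lemma sinhP_pos (hp : 1 ≤ p) {x : ℝ} (hx : 0 < x) : 0 < sinhP p x := by
  simpa only [sinhP_zero hp] using strictMonoOn_sinhP hp self_mem_Ici hx.le hx

lemma continuousAt_sinhP (hp : 1 ≤ p) {x : ℝ} (hx : 0 < x) : ContinuousAt (sinhP p) x :=
  (strictMonoOn_sinhP hp).continuousAt_of_image_mem_nhds (Ici_mem_nhds hx)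
    (by rw [(sinhP_bijOn hp).image_eq]; exact Ici_mem_nhds (sinhP_pos hp hx))

lemma continuousOn_sinhP (hp : 1 ≤ p) : ContinuousOn (sinhP p) (Ici 0) := by
  intro x (hx : 0 ≤ x)
  obtain rfl | hx := hx.eq_or_lt
  · refine (strictMonoOn_sinhP hp).continuousWithinAt_right_of_image_mem_nhdsWithin
      self_mem_nhdsWithin ?_
    rw [(sinhP_bijOn hp).image_eq, sinhP_zero hp]
    exact self_mem_nhdsWithin
  · exact (continuousAt_sinhP hp hx).continuousWithinAt

lemma hasDerivAt_sinhP (hp : 1 ≤ p) {x : ℝ} (hx : 0 < x) :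
    HasDerivAt (sinhP p) (coshP p x) x := by
  have hs := sinhP_pos hp hx
  have h := (hasDerivAt_arcsinhP (zero_le_one.trans hp) hs).of_local_left_inverse
    (continuousAt_sinhP hp hx) (rpow_pos_of_pos (one_add_rpow_pos hs.le) _).ne'
    (Filter.eventually_of_mem (Ioi_mem_nhds hx) fun y (hy : 0 < y) => (sinhP_invOn hp).2 hy.le)
  rwa [rpow_neg (one_add_rpow_pos hs.le).le, inv_inv] at h

lemma coshP_rpow (hp : 1 ≤ p) {x : ℝ} (hx : 0 ≤ x) (r : ℝ) :
    coshP p x ^ r = (1 + sinhP p x ^ p) ^ (r / p) := by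
  rw [coshP, ← rpow_mul (one_add_rpow_pos (sinhP_nonneg hp hx)).le, one_div_mul_eq_div]

lemma HasDerivAt.one_add_rpow_primitive {s : ℝ → ℝ} {x : ℝ} (hp : p ≠ 0) (hs : 0 < s x)
    (hds : HasDerivAt s ((1 + s x ^ p) ^ (1 / p)) x) :
    HasDerivAt (fun t => (1 / p) * ((p - 1) * t + (1 + s t ^ p) ^ ((p - 1) / p) * s t))
      (1 + s x ^ p) x := by
  set u := 1 + s x ^ p with hu_def
  have hu : 0 < u := one_add_rpow_pos hs.le
  have hdu : HasDerivAt (fun t => 1 + s t ^ p) (u ^ (1 / p) * p * s x ^ (p - 1)) x :=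
    (hds.rpow_const (Or.inl hs.ne')).const_add 1
  refine (((hasDerivAt_id x).const_mul (p - 1)).add ((hdu.rpow_const (p := (p - 1) / p)
    (Or.inl hu.ne')).mul hds)).const_mul (1 / p) |>.congr_deriv ?_
  have e1 : u ^ (1 / p) * u ^ ((p - 1) / p - 1) = 1 := by
    rw [← rpow_add hu, show 1 / p + ((p - 1) / p - 1) = 0 by field_simp; ring, rpow_zero]
  have e2 : s x ^ (p - 1) * s x = s x ^ p := by
    rw [← rpow_add_one hs.ne', sub_add_cancel]
  have e3 : u ^ ((p - 1) / p) * u ^ (1 / p) = u := by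
    rw [← rpow_add hu, show (p - 1) / p + 1 / p = 1 by field_simp; ring, rpow_one]
  calc _ = 1 / p * ((p - 1) + (p - 1) * (u ^ (1 / p) * u ^ ((p - 1) / p - 1)) *
        (s x ^ (p - 1) * s x) + u ^ ((p - 1) / p) * u ^ (1 / p)) := by field_simp; ring
    _ = u := by rw [e1, e2, e3, hu_def]; field_simp; ring

end

/-- `∫₀^z (cosh_p t)^p dt = (1/p)((p-1) z + (cosh_p z)^(p-1) sinh_p z)` for `z ≥ 0`. -/
theorem integral_coshP_rpow (p : ℝ) (hp : 1 < p) (z : ℝ) (hz : 0 ≤ z) :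
    (∫ t in (0:ℝ)..z, coshP p t ^ p) =
      (1 / p) * ((p - 1) * z + coshP p z ^ (p - 1) * sinhP p z) := by
  have hp0 : p ≠ 0 := by positivity
  have hsub : uIcc 0 z ⊆ Ici 0 := by rw [uIcc_of_le hz]; exact Icc_subset_Ici_self
  have hcont : ContinuousOn (fun t => 1 + sinhP p t ^ p) (Ici 0) :=
    continuousOn_const.add ((continuousOn_sinhP hp.le).rpow_const fun _ _ => Or.inr (by linarith))
  have hFcont : ContinuousOn
      (fun t => (1 / p) * ((p - 1) * t + (1 + sinhP p t ^ p) ^ ((p - 1) / p) * sinhP p t))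
      (Icc 0 z) :=
    (continuousOn_const.mul ((continuousOn_const.mul continuousOn_id).add
      ((hcont.rpow_const fun t ht => Or.inl (one_add_rpow_pos (sinhP_nonneg hp.le ht)).ne').mul
        (continuousOn_sinhP hp.le)))).mono Icc_subset_Ici_self
  calc (∫ t in (0:ℝ)..z, coshP p t ^ p) = ∫ t in (0:ℝ)..z, 1 + sinhP p t ^ p :=
        integral_congr fun t ht => by rw [coshP_rpow hp.le (hsub ht), div_self hp0, rpow_one]
    _ = (1 / p) * ((p - 1) * z + (1 + sinhP p z ^ p) ^ ((p - 1) / p) * sinhP p z) := by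
        rw [integral_eq_sub_of_hasDerivAt_of_le hz hFcont
          (fun x hx => (hasDerivAt_sinhP hp.le hx.1).one_add_rpow_primitive hp0
            (sinhP_pos hp.le hx.1))
          (hcont.mono hsub).intervalIntegrable]
        simp [sinhP_zero hp.le]
    _ = _ := by rw [coshP_rpow hp.le hz]
end

section
/- Let 1 < p < ∞. For every z ≥ 0, ∫₀^z (sinh_p(t))^p dt = (1/p)·(−z + (cosh_p(z))^{p−1}·sinh_p(z)). -/
/-!
Extend `arcsinh_p` to an odd function `A` on `ℝ`. Its derivative `(1 + |t|ᵖ)^(-1/p)` is positive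
and at least `2^(-1/p) / t` for `t ≥ 1`, so `A` is a strictly increasing bijection of `ℝ` with
`A ≥ 2^(-1/p) log` at infinity. Its inverse `s` agrees with `sinh_p` on `[0, ∞)` and solves
`s' = (1 + sᵖ)^(1/p) = cosh_p`. Along such a solution `(cosh_pᵖ⁻¹)' = (p - 1) sᵖ⁻¹`, hence
`(cosh_pᵖ⁻¹ s)' = (p - 1) sᵖ + cosh_pᵖ = p sᵖ + 1`, and the formula follows by the fundamental
theorem of calculus.
-/

open Real Set Filter intervalIntegral

noncomputable def arcsinhPDeriv (p t : ℝ) : ℝ := (1 + |t| ^ p) ^ (-(1 / p))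

/-- The odd extension of `arcsinhP` to `ℝ`: its inverse is then differentiable at `0` as well. -/
noncomputable def arcsinhPOdd (p x : ℝ) : ℝ := ∫ t in (0:ℝ)..x, arcsinhPDeriv p t

section arcsinhPOdd

variable {p : ℝ}

lemma arcsinhPDeriv_pos (p t : ℝ) : 0 < arcsinhPDeriv p t := by
  unfold arcsinhPDeriv; positivity

lemma continuous_arcsinhPDeriv (hp : 0 ≤ p) : Continuous (arcsinhPDeriv p) :=
  (continuous_const.add (continuous_abs.rpow_const fun _ => Or.inr hp)).rpow_const
    fun t => Or.inl (by positivity : (0:ℝ) < 1 + |t| ^ p).ne'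

lemma hasDerivAt_arcsinhPOdd (hp : 0 ≤ p) (x : ℝ) :
    HasDerivAt (arcsinhPOdd p) (arcsinhPDeriv p x) x :=
  ((continuous_arcsinhPDeriv hp).integral_hasStrictDerivAt 0 x).hasDerivAt

lemma continuous_arcsinhPOdd (hp : 0 ≤ p) : Continuous (arcsinhPOdd p) :=
  continuous_iff_continuousAt.2 fun x => (hasDerivAt_arcsinhPOdd hp x).continuousAt

lemma strictMono_arcsinhPOdd (hp : 0 ≤ p) : StrictMono (arcsinhPOdd p) :=
  strictMono_of_deriv_pos fun x => by
    rw [(hasDerivAt_arcsinhPOdd hp x).deriv]; exact arcsinhPDeriv_pos p x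

lemma arcsinhPOdd_neg (p x : ℝ) : arcsinhPOdd p (-x) = -arcsinhPOdd p x := by
  have heven : ∀ t, arcsinhPDeriv p (-t) = arcsinhPDeriv p t := fun t => by
    rw [arcsinhPDeriv, abs_neg, arcsinhPDeriv]
  have h := integral_comp_neg (a := 0) (b := x) (arcsinhPDeriv p)
  simp only [heven, neg_zero] at h
  rw [arcsinhPOdd, integral_symm, arcsinhPOdd, ← h]

lemma arcsinhPOdd_eq_arcsinhP {x : ℝ} (hx : 0 ≤ x) : arcsinhPOdd p x = arcsinhP p x :=
  integral_congr fun t ht => by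
    rw [uIcc_of_le hx] at ht
    rw [arcsinhPDeriv, abs_of_nonneg ht.1]

lemma inv_mul_le_arcsinhPDeriv (hp : 0 < p) {t : ℝ} (ht : 1 ≤ t) :
    (2 : ℝ) ^ (-(1 / p)) * t⁻¹ ≤ arcsinhPDeriv p t := by
  have ht0 : 0 < t := one_pos.trans_le ht
  have hle : 1 + t ^ p ≤ 2 * t ^ p := by linarith [one_le_rpow ht hp.le]
  calc (2 : ℝ) ^ (-(1 / p)) * t⁻¹ = (2 * t ^ p) ^ (-(1 / p)) := by
        rw [mul_rpow zero_le_two (rpow_nonneg ht0.le p), ← rpow_mul ht0.le,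
          mul_neg, mul_one_div_cancel hp.ne', rpow_neg_one]
    _ ≤ arcsinhPDeriv p t := by
        rw [arcsinhPDeriv, abs_of_pos ht0]
        exact rpow_le_rpow_of_nonpos (by positivity) hle (by simp [hp.le])

lemma mul_log_le_arcsinhPOdd (hp : 0 < p) {x : ℝ} (hx : 1 ≤ x) :
    (2 : ℝ) ^ (-(1 / p)) * log x ≤ arcsinhPOdd p x := by
  have hcont := continuous_arcsinhPDeriv hp.le
  have hlog : ∫ t in (1:ℝ)..x, (2 : ℝ) ^ (-(1 / p)) * t⁻¹ = (2 : ℝ) ^ (-(1 / p)) * log x := by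
    rw [integral_const_mul, integral_inv_of_pos one_pos (one_pos.trans_le hx), div_one]
  have hhead : 0 ≤ ∫ t in (0:ℝ)..1, arcsinhPDeriv p t :=
    integral_nonneg zero_le_one fun t _ => (arcsinhPDeriv_pos p t).le
  have htail : ∫ t in (1:ℝ)..x, (2 : ℝ) ^ (-(1 / p)) * t⁻¹ ≤
      ∫ t in (1:ℝ)..x, arcsinhPDeriv p t := by
    refine integral_mono_on hx ?_ (hcont.intervalIntegrable 1 x)
      fun t ht => inv_mul_le_arcsinhPDeriv hp ht.1
    refine (continuousOn_const.mul (continuousOn_inv₀.mono fun t ht => ?_)).intervalIntegrable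
    rw [uIcc_of_le hx] at ht
    exact (one_pos.trans_le ht.1).ne'
  rw [arcsinhPOdd, ← integral_add_adjacent_intervals (hcont.intervalIntegrable 0 1)
    (hcont.intervalIntegrable 1 x)]
  linarith

lemma tendsto_arcsinhPOdd_atTop (hp : 0 < p) : Tendsto (arcsinhPOdd p) atTop atTop :=
  tendsto_atTop_mono' atTop
    (eventually_ge_atTop 1 |>.mono fun _ hx => mul_log_le_arcsinhPOdd hp hx)
    (tendsto_log_atTop.const_mul_atTop (rpow_pos_of_pos two_pos _))

lemma surjective_arcsinhPOdd (hp : 0 < p) : Function.Surjective (arcsinhPOdd p) := by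
  have htop := tendsto_arcsinhPOdd_atTop hp
  have hbot : Tendsto (arcsinhPOdd p) atBot atBot := by
    have h := tendsto_neg_atTop_atBot.comp (htop.comp tendsto_neg_atBot_atTop)
    refine h.congr fun x => ?_
    simp [arcsinhPOdd_neg]
  exact (continuous_arcsinhPOdd hp.le).surjective htop hbot

noncomputable def arcsinhPOrderIso (hp : 0 < p) : ℝ ≃o ℝ :=
  (strictMono_arcsinhPOdd hp.le).orderIsoOfSurjective _ (surjective_arcsinhPOdd hp)

lemma arcsinhPOdd_arcsinhPOrderIso_symm (hp : 0 < p) (x : ℝ) :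
    arcsinhPOdd p ((arcsinhPOrderIso hp).symm x) = x :=
  (arcsinhPOrderIso hp).apply_symm_apply x

lemma arcsinhPOrderIso_symm_zero (hp : 0 < p) : (arcsinhPOrderIso hp).symm 0 = 0 :=
  (arcsinhPOrderIso hp).symm_apply_eq.2 (by simp [arcsinhPOrderIso, arcsinhPOdd])

lemma arcsinhPOrderIso_symm_nonneg (hp : 0 < p) {x : ℝ} (hx : 0 ≤ x) :
    0 ≤ (arcsinhPOrderIso hp).symm x :=
  arcsinhPOrderIso_symm_zero hp ▸ (arcsinhPOrderIso hp).symm.monotone hx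

lemma sinhP_eq_arcsinhPOrderIso_symm (hp : 0 < p) {x : ℝ} (hx : 0 ≤ x) :
    sinhP p x = (arcsinhPOrderIso hp).symm x := by
  have hinj : InjOn (arcsinhP p) (Ici 0) := fun a ha b hb hab =>
    (strictMono_arcsinhPOdd hp.le).injective <| by
      rw [arcsinhPOdd_eq_arcsinhP ha, arcsinhPOdd_eq_arcsinhP hb, hab]
  have hs := arcsinhPOrderIso_symm_nonneg hp hx
  conv_lhs => rw [← arcsinhPOdd_arcsinhPOrderIso_symm hp x, arcsinhPOdd_eq_arcsinhP hs]
  exact hinj.leftInvOn_invFunOn hs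

lemma hasDerivAt_arcsinhPOrderIso_symm (hp : 0 < p) {x : ℝ} (hx : 0 ≤ x) :
    HasDerivAt (arcsinhPOrderIso hp).symm
      ((1 + (arcsinhPOrderIso hp).symm x ^ p) ^ (1 / p)) x := by
  set s := (arcsinhPOrderIso hp).symm
  have hs : 0 ≤ s x := arcsinhPOrderIso_symm_nonneg hp hx
  refine (HasDerivAt.of_local_left_inverse s.continuous.continuousAt
    (hasDerivAt_arcsinhPOdd hp.le (s x)) (arcsinhPDeriv_pos p _).ne'
    (Eventually.of_forall (arcsinhPOdd_arcsinhPOrderIso_symm hp))).congr_deriv ?_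
  rw [arcsinhPDeriv, abs_of_nonneg hs, rpow_neg (by positivity), inv_inv]

end arcsinhPOdd

section Primitive

variable {p : ℝ} {s : ℝ → ℝ} {x : ℝ}

lemma hasDerivAt_one_add_rpow_rpow_sub_one_div (hp : 1 ≤ p) (hs : 0 ≤ s x)
    (hds : HasDerivAt s ((1 + s x ^ p) ^ (1 / p)) x) :
    HasDerivAt (fun y => (1 + s y ^ p) ^ ((p - 1) / p)) ((p - 1) * s x ^ (p - 1)) x := by
  have hu : 0 < 1 + s x ^ p := by positivity
  have h := ((hasDerivAt_rpow_const (Or.inr hp)).comp x hds).const_add 1 |>.rpow_const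
    (p := (p - 1) / p) (Or.inl hu.ne')
  refine h.congr_deriv ?_
  have hexp : (p - 1) / p - 1 + 1 / p = 0 := by field_simp; ring
  calc _ = ((p - 1) / p * p) * s x ^ (p - 1) *
          ((1 + s x ^ p) ^ ((p - 1) / p - 1) * (1 + s x ^ p) ^ (1 / p)) := by
        simp only [Function.comp_apply]; ring
    _ = (p - 1) * s x ^ (p - 1) := by
        rw [← rpow_add hu, hexp, rpow_zero, div_mul_cancel₀ _ (by positivity), mul_one]

lemma hasDerivAt_rpow_primitive (hp : 1 ≤ p) (hs : 0 ≤ s x)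
    (hds : HasDerivAt s ((1 + s x ^ p) ^ (1 / p)) x) :
    HasDerivAt (fun y => 1 / p * (-y + (1 + s y ^ p) ^ ((p - 1) / p) * s y)) (s x ^ p) x := by
  have hp0 : p ≠ 0 := by positivity
  have hu : 0 < 1 + s x ^ p := by positivity
  have hC := hasDerivAt_one_add_rpow_rpow_sub_one_div hp hs hds
  refine (((hasDerivAt_id x).neg.add (hC.mul hds)).const_mul (1 / p)).congr_deriv ?_
  have hpow : s x ^ (p - 1) * s x = s x ^ p := by
    conv_rhs => rw [← sub_add_cancel p 1, rpow_add' hs (by simpa using hp0), rpow_one]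
  have hcosh : (1 + s x ^ p) ^ ((p - 1) / p) * (1 + s x ^ p) ^ (1 / p) = 1 + s x ^ p := by
    rw [← rpow_add hu, ← add_div, sub_add_cancel, div_self hp0, rpow_one]
  simp only [mul_assoc, hpow, hcosh]
  field_simp
  ring

end Primitive

/-- `∫₀^z (sinh_p t)^p dt = (1/p)(-z + (cosh_p z)^(p-1) sinh_p z)` for `z ≥ 0`. -/
theorem integral_sinhP_rpow (p : ℝ) (hp : 1 < p) (z : ℝ) (hz : 0 ≤ z) :
    (∫ t in (0:ℝ)..z, sinhP p t ^ p) =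
      (1 / p) * (-z + coshP p z ^ (p - 1) * sinhP p z) := by
  have hp0 : 0 < p := one_pos.trans hp
  set s := (arcsinhPOrderIso hp0).symm
  have hnonneg : ∀ t ∈ uIcc 0 z, 0 ≤ t := fun t ht => (uIcc_of_le hz ▸ ht).1
  have hsinh : EqOn (sinhP p) s (uIcc 0 z) := fun t ht =>
    sinhP_eq_arcsinhPOrderIso_symm hp0 (hnonneg t ht)
  have hcosh : coshP p z ^ (p - 1) = (1 + s z ^ p) ^ ((p - 1) / p) := by
    rw [coshP, hsinh right_mem_uIcc,
      ← rpow_mul (by positivity [arcsinhPOrderIso_symm_nonneg hp0 hz]), one_div_mul_eq_div]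
  have hprim : ∀ t ∈ uIcc 0 z, HasDerivAt
      (fun y => 1 / p * (-y + (1 + s y ^ p) ^ ((p - 1) / p) * s y)) (s t ^ p) t := fun t ht =>
    hasDerivAt_rpow_primitive hp.le (arcsinhPOrderIso_symm_nonneg hp0 (hnonneg t ht))
      (hasDerivAt_arcsinhPOrderIso_symm hp0 (hnonneg t ht))
  rw [hcosh, hsinh right_mem_uIcc, integral_congr fun t ht => congrArg (· ^ p) (hsinh ht),
    integral_eq_sub_of_hasDerivAt hprim
      ((s.continuous.rpow_const fun _ => Or.inr hp0.le).intervalIntegrable 0 z)]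
  simp [s, arcsinhPOrderIso_symm_zero, zero_rpow hp0.ne']
end
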